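/- arXiv:2404.01936 — 5 statements merged into one kernel-verified Lean document; each statement's English description precedes it below -/
import Mathlib

section
/- Let r > 0 and let p, q be real numbers with |p - q| ≤ r. If t is drawn uniformly at random from the interval [0, r), then the probability that ⌊(p - t)/r⌋ ≠ ⌊(q - t)/r⌋ is exactly |p - q| / r. -/
/-!
The set of shifts `t` separating `p` and `q` is invariant under translation by `r ℤ`, so its
measure inside the period `[0, r)` equals its measure inside any other period, such as
`(p - r, p]`. On that window `p` lies in grid cell `0`, and for `q ≤ p ≤ q + r` the point `q`
lies in cell `0` or `-1` according as `t ≤ q` or not; the separating shifts there are exactly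
`(q, p]`, of length `p - q`.
-/

open MeasureTheory Set

def separatingShifts (r p q : ℝ) : Set ℝ := {t | ⌊(p - t) / r⌋ ≠ ⌊(q - t) / r⌋}

theorem separatingShifts_comm (r p q : ℝ) : separatingShifts r p q = separatingShifts r q p := by
  ext t
  exact ne_comm

theorem measurableSet_separatingShifts (r p q : ℝ) : MeasurableSet (separatingShifts r p q) :=
  (measurableSet_eq_fun (by fun_prop) (by fun_prop)).compl

theorem floor_sub_zsmul_add_div {r : ℝ} (hr : r ≠ 0) (x t : ℝ) (n : ℤ) :
    ⌊(x - (n • r + t)) / r⌋ = ⌊(x - t) / r⌋ - n := by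
  rw [← Int.floor_sub_intCast]
  congr 1
  field_simp
  rw [zsmul_eq_mul]
  ring

theorem vadd_preimage_separatingShifts (r p q : ℝ) (g : AddSubgroup.zmultiples r) :
    (fun t => g +ᵥ t) ⁻¹' separatingShifts r p q = separatingShifts r p q := by
  obtain ⟨_, n, rfl⟩ := g
  rcases eq_or_ne r 0 with rfl | hr
  · simp
  ext t
  simp only [mem_preimage, separatingShifts, mem_ofPred_eq, AddSubgroup.vadd_def, vadd_eq_add,
    floor_sub_zsmul_add_div hr, ne_eq, sub_left_inj]

theorem separatingShifts_inter_Ioc {r p q : ℝ} (hr : 0 < r) (hqp : q ≤ p) (hpq : p - q ≤ r) :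
    separatingShifts r p q ∩ Ioc (p - r) p = Ioc q p := by
  ext t
  simp only [separatingShifts, mem_inter_iff, mem_ofPred_eq, mem_Ioc]
  constructor
  · rintro ⟨hne, hpt, htp⟩
    refine ⟨?_, htp⟩
    by_contra! htq
    apply hne
    rw [Int.floor_eq_zero_iff.mpr, Int.floor_eq_zero_iff.mpr] <;> constructor <;>
      first | positivity | (rw [div_lt_one hr]; linarith)
  · rintro ⟨hqt, htp⟩
    refine ⟨?_, by linarith, htp⟩
    rw [Int.floor_eq_zero_iff.mpr, (Int.floor_eq_iff (z := -1)).mpr]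
    · simp
    · constructor
      · rw [le_div_iff₀ hr]; push_cast; linarith
      · rw [div_lt_iff₀ hr]; push_cast; linarith
    · constructor
      · apply div_nonneg <;> linarith
      · rw [div_lt_one hr]; linarith

theorem volume_separatingShifts_inter_Ico {r p q : ℝ} (hr : 0 < r) (hpq : |p - q| ≤ r) :
    volume (separatingShifts r p q ∩ Ico 0 r) = ENNReal.ofReal |p - q| := by
  wlog hqp : q ≤ p generalizing p q
  · rw [separatingShifts_comm, abs_sub_comm]
    exact this (by rwa [abs_sub_comm]) (le_of_not_ge hqp)
  rw [abs_of_nonneg (sub_nonneg.mpr hqp)] at hpq ⊢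
  calc volume (separatingShifts r p q ∩ Ico 0 r)
      = volume (separatingShifts r p q ∩ Ioc 0 (0 + r)) := by
        rw [zero_add]
        exact measure_congr (ae_eq_refl _ |>.inter Ico_ae_eq_Ioc)
    _ = volume (separatingShifts r p q ∩ Ioc (p - r) (p - r + r)) :=
        (isAddFundamentalDomain_Ioc hr 0).measure_set_eq (isAddFundamentalDomain_Ioc hr _)
          (measurableSet_separatingShifts r p q) (vadd_preimage_separatingShifts r p q)
    _ = ENNReal.ofReal (p - q) := by
        rw [sub_add_cancel, separatingShifts_inter_Ioc hr hqp hpq, Real.volume_Ioc]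

/-- For `r > 0` and reals `p, q` with `|p - q| ≤ r`, if `t` is drawn
uniformly at random from `[0, r)`, the probability that the shifted grid cells
`⌊(p - t)/r⌋` and `⌊(q - t)/r⌋` differ is exactly `|p - q| / r`. -/
theorem one_dim_grid_separation (r p q : ℝ) (hr : 0 < r) (hpq : |p - q| ≤ r) :
    ((ENNReal.ofReal r)⁻¹ • volume.restrict (Set.Ico (0 : ℝ) r))
      {t : ℝ | ⌊(p - t) / r⌋ ≠ ⌊(q - t) / r⌋} = ENNReal.ofReal (|p - q| / r) := by
  change ((ENNReal.ofReal r)⁻¹ • volume.restrict (Ico 0 r)) (separatingShifts r p q) = _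
  rw [Measure.smul_apply, Measure.restrict_apply' measurableSet_Ico,
    volume_separatingShifts_inter_Ico hr hpq, ENNReal.ofReal_div_of_pos hr,
    ENNReal.div_eq_inv_mul, smul_eq_mul]
end

section
/- Let r > 0 and p, q ∈ ℝ^d. If the shift t is drawn uniformly at random from [0, r)^d, then the probability that there exists a coordinate i ∈ {1, …, d} with ⌊(p_i - t_i)/r⌋ ≠ ⌊(q_i - t_i)/r⌋ is at most √d · ‖p - q‖₂ / r. -/
/-!
A union bound over the coordinates reduces the claim to one dimension. For `a ≤ b`, the floors
`⌊(a - s)/r⌋` and `⌊(b - s)/r⌋` differ exactly when some translate `s + k r` falls in `(a, b]`,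
so the bad shifts in `[0, r)` are covered by the pieces of the translates of `(a, b]` by `rℤ`
that meet `[0, r)`; as `[0, r)` is a fundamental domain of `rℤ`, these pieces have total length
`b - a`. The remaining coordinates contribute a factor `r ^ (d - 1)`, and Cauchy–Schwarz gives
`∑ |p i - q i| ≤ √d ‖p - q‖`.
-/

open MeasureTheory Set
open scoped Pointwise

theorem MeasureTheory.IsAddFundamentalDomain.measure_iUnion_vadd_inter_le {G α : Type*}
    [AddGroup G] [Countable G] [AddAction G α] [MeasurableSpace α] [MeasurableConstVAdd G α]
    {μ : Measure α} [VAddInvariantMeasure G α μ] {s : Set α}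
    (h : IsAddFundamentalDomain G s μ) (t : Set α) :
    μ ((⋃ g : G, g +ᵥ t) ∩ s) ≤ μ t := by
  rw [h.measure_eq_tsum t, iUnion_inter]
  exact measure_iUnion_le _

theorem MeasureTheory.Measure.pi_univ_pi_inter_setOf_exists_mem_le {ι : Type*} [Fintype ι]
    [DecidableEq ι] {α : ι → Type*} [∀ i, MeasurableSpace (α i)] (μ : ∀ i, Measure (α i))
    [∀ i, SigmaFinite (μ i)] (I A : ∀ i, Set (α i)) :
    Measure.pi μ (univ.pi I ∩ {x | ∃ i, x i ∈ A i}) ≤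
      ∑ i, μ i (A i ∩ I i) * ∏ j ∈ Finset.univ.erase i, μ j (I j) := by
  have hcover : univ.pi I ∩ {x | ∃ i, x i ∈ A i} ⊆
      ⋃ i, univ.pi (Function.update I i (A i ∩ I i)) := by
    rintro x ⟨hxI, i, hxA⟩
    refine mem_iUnion.2 ⟨i, mem_univ_pi.2 fun j => ?_⟩
    rcases eq_or_ne j i with rfl | hji
    · simpa using ⟨hxA, hxI j trivial⟩
    · simpa [hji] using hxI j trivial
  refine (measure_mono hcover).trans ((measure_iUnion_fintype_le _ _).trans_eq ?_)
  refine Finset.sum_congr rfl fun i _ => ?_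
  rw [Measure.pi_pi, ← Finset.sdiff_singleton_eq_erase,
    ← Finset.prod_update_of_mem (Finset.mem_univ i)]
  exact Finset.prod_congr rfl fun j _ => Function.apply_update (fun j => μ j) I i _ j

theorem Real.volume_pi_Ico_inter_setOf_exists_mem_le {ι : Type*} [Fintype ι] (r : ℝ)
    (A : ι → Set ℝ) :
    volume (univ.pi (fun _ => Ico 0 r) ∩ {x : ι → ℝ | ∃ i, x i ∈ A i}) ≤
      ∑ i, volume (A i ∩ Ico 0 r) * ENNReal.ofReal r ^ (Fintype.card ι - 1) := by
  classical
  simpa [volume_pi, Finset.card_erase_of_mem] using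
    Measure.pi_univ_pi_inter_setOf_exists_mem_le (fun _ => volume) (fun _ => Ico 0 r) A

theorem setOf_floor_sub_div_ne_subset {r a b : ℝ} (hr : 0 < r) (hab : a ≤ b) :
    {s : ℝ | ⌊(a - s) / r⌋ ≠ ⌊(b - s) / r⌋} ⊆
      ⋃ g : AddSubgroup.zmultiples r, g +ᵥ Ioc a b := by
  intro s hs
  set k := ⌊(b - s) / r⌋
  have hk : ⌊(a - s) / r⌋ < k := (Int.floor_le_floor (by gcongr)).lt_of_ne hs
  refine mem_iUnion.2 ⟨⟨-k • r, AddSubgroup.zsmul_mem_zmultiples _ _⟩, ?_⟩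
  rw [AddSubgroup.vadd_def, mem_vadd_set]
  refine ⟨s + k * r, ⟨?_, ?_⟩, by simp⟩
  · have := Int.floor_lt.1 hk
    rw [div_lt_iff₀ hr] at this
    linarith
  · have := Int.floor_le ((b - s) / r)
    rw [le_div_iff₀ hr] at this
    linarith

theorem volume_setOf_floor_sub_div_ne_inter_Ico_le {r : ℝ} (hr : 0 < r) (a b : ℝ) :
    volume ({s : ℝ | ⌊(a - s) / r⌋ ≠ ⌊(b - s) / r⌋} ∩ Ico 0 r) ≤ ENNReal.ofReal |a - b| := by
  wlog hab : a ≤ b generalizing a b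
  · simpa only [ne_comm, abs_sub_comm] using this b a (le_of_not_ge hab)
  calc volume ({s : ℝ | ⌊(a - s) / r⌋ ≠ ⌊(b - s) / r⌋} ∩ Ico 0 r)
      = volume ({s : ℝ | ⌊(a - s) / r⌋ ≠ ⌊(b - s) / r⌋} ∩ Ioc 0 (0 + r)) := by
        rw [zero_add]
        exact measure_congr (ae_eq_refl _ |>.inter Ico_ae_eq_Ioc)
    _ ≤ volume ((⋃ g : AddSubgroup.zmultiples r, g +ᵥ Ioc a b) ∩ Ioc 0 (0 + r)) :=
        measure_mono (inter_subset_inter_left _ (setOf_floor_sub_div_ne_subset hr hab))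
    _ ≤ volume (Ioc a b) := (isAddFundamentalDomain_Ioc hr 0).measure_iUnion_vadd_inter_le _
    _ = ENNReal.ofReal |a - b| := by
        rw [Real.volume_Ioc, abs_sub_comm, abs_of_nonneg (sub_nonneg.2 hab)]

theorem EuclideanSpace.sum_abs_le_sqrt_card_mul_norm {ι : Type*} [Fintype ι]
    (x : EuclideanSpace ℝ ι) : ∑ i, |x i| ≤ √(Fintype.card ι) * ‖x‖ :=
  calc ∑ i, |x i| = √((∑ i, |x i|) ^ 2) :=
        (Real.sqrt_sq (Finset.sum_nonneg fun i _ => abs_nonneg _)).symm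
    _ ≤ √(Fintype.card ι * ‖x‖ ^ 2) := by
        gcongr
        simpa [EuclideanSpace.norm_sq_eq] using
          sq_sum_le_card_mul_sum_sq (s := Finset.univ) (f := fun i => |x i|)
    _ = √(Fintype.card ι) * ‖x‖ := by
        rw [Real.sqrt_mul (by positivity), Real.sqrt_sq (norm_nonneg _)]

/-- For `r > 0` and `p, q ∈ ℝ^d`, if the shift `t` is drawn uniformly at
random from `[0, r)^d`, the probability that some coordinate `i` satisfies
`⌊(p i - t i)/r⌋ ≠ ⌊(q i - t i)/r⌋` (i.e. the shifted grid separates `p` and `q`)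
is at most `√d · ‖p - q‖₂ / r`. -/
theorem grid_separation_prob_le (d : ℕ) (r : ℝ) (hr : 0 < r)
    (p q : EuclideanSpace ℝ (Fin d)) :
    ((ENNReal.ofReal (r ^ d))⁻¹ •
        volume.restrict {t : EuclideanSpace ℝ (Fin d) | ∀ i, t i ∈ Set.Ico (0 : ℝ) r})
      {t : EuclideanSpace ℝ (Fin d) | ∃ i, ⌊(p i - t i) / r⌋ ≠ ⌊(q i - t i) / r⌋}
      ≤ ENNReal.ofReal (Real.sqrt d * ‖p - q‖ / r) := by
  set A : Fin d → Set ℝ := fun i => {s | ⌊(p i - s) / r⌋ ≠ ⌊(q i - s) / r⌋}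
  have hbox : MeasurableSet {t : EuclideanSpace ℝ (Fin d) | ∀ i, t i ∈ Ico (0 : ℝ) r} := by
    measurability
  have hterm : ∀ i, (ENNReal.ofReal (r ^ d))⁻¹ *
      (volume (A i ∩ Ico 0 r) * ENNReal.ofReal r ^ (d - 1)) ≤ ENNReal.ofReal (|p i - q i| / r) := by
    intro i
    rw [← ENNReal.ofReal_pow hr.le, ← ENNReal.ofReal_inv_of_pos (by positivity)]
    grw [volume_setOf_floor_sub_div_ne_inter_Ico_le hr]
    rw [← ENNReal.ofReal_mul (abs_nonneg _), ← ENNReal.ofReal_mul (by positivity)]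
    refine ENNReal.ofReal_le_ofReal (le_of_eq ?_)
    rw [← pow_sub_one_mul i.pos.ne' r]
    field_simp
  calc _ = (ENNReal.ofReal (r ^ d))⁻¹ *
        volume (univ.pi (fun _ => Ico 0 r) ∩ {x : Fin d → ℝ | ∃ i, x i ∈ A i}) := by
        rw [Measure.smul_apply, smul_eq_mul, Measure.restrict_apply' hbox, inter_comm,
          ← (EuclideanSpace.volume_preserving_symm_measurableEquiv_toLp _).measure_preimage_equiv]
        congr 2
        ext t
        simp [A]
    _ ≤ (ENNReal.ofReal (r ^ d))⁻¹ *
        ∑ i, volume (A i ∩ Ico 0 r) * ENNReal.ofReal r ^ (d - 1) := by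
        grw [Real.volume_pi_Ico_inter_setOf_exists_mem_le, Fintype.card_fin]
    _ ≤ ∑ i, ENNReal.ofReal (|p i - q i| / r) := by
        rw [Finset.mul_sum]
        exact Finset.sum_le_sum fun i _ => hterm i
    _ ≤ ENNReal.ofReal (Real.sqrt d * ‖p - q‖ / r) := by
        rw [← ENNReal.ofReal_sum_of_nonneg fun i _ => by positivity, ← Finset.sum_div]
        gcongr
        simpa using EuclideanSpace.sum_abs_le_sqrt_card_mul_norm (p - q)
end

section
/- Let P = {p_1, …, p_n} ⊂ ℝ^d, let σ : P → ℝ^d be an assignment of each point to a center, let U > 0 satisfy Σ_{p ∈ P} ‖p - σ(p)‖₂ ≤ U, and set the grid side length r := √d · n² · U. If the shift t is drawn uniformly at random from [0, r)^d, then the probability that there exists a point p ∈ P lying in a different grid cell than σ(p) is at most 1/n². -/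
/-!
Along one axis, the shift `t` separates `a ≤ b` exactly when a point of the lattice `t + rℤ`
falls in `(a, b]`; reduced modulo `r` this happens on a set of length at most `b - a`. So the
event that coordinate `i` of `p j` and `σ j` lie in different cells occupies volume at most
`|p j i - σ j i| · r^(d-1)` of the box `[0, r)^d`. A union bound over `j` and `i`, with
`∑ i, |x i| ≤ √d ‖x‖`, bounds the volume of the bad shifts by `√d U r^(d-1) = r^d / n²`.
-/

open MeasureTheory Set
open scoped Pointwise

theorem volume_floor_div_ne_inter_Ico_le_of_le {r : ℝ} (hr : 0 < r) {a b : ℝ} (hab : a ≤ b) :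
    volume ({t : ℝ | ⌊(a - t) / r⌋ ≠ ⌊(b - t) / r⌋} ∩ Ico 0 r) ≤ ENNReal.ofReal (b - a) := by
  have hF := isAddFundamentalDomain_Ioc hr 0
  rw [zero_add] at hF
  have hcover : {t : ℝ | ⌊(a - t) / r⌋ ≠ ⌊(b - t) / r⌋} ∩ Ioc 0 r ⊆
      ⋃ g : AddSubgroup.zmultiples r, (g +ᵥ Ioc a b) ∩ Ioc 0 r := by
    rintro t ⟨hne, ht⟩
    set k := ⌊(b - t) / r⌋
    have hlt : ⌊(a - t) / r⌋ < k :=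
      lt_of_le_of_ne (Int.floor_mono (by gcongr)) hne
    refine mem_iUnion.2 ⟨⟨(-k) • r, AddSubgroup.zsmul_mem_zmultiples r (-k)⟩, ?_, ht⟩
    rw [mem_vadd_set_iff_neg_vadd_mem]
    have h1 : a - t < k * r := (div_lt_iff₀ hr).1 (Int.floor_lt.1 hlt)
    have h2 : k * r ≤ b - t := (le_div_iff₀ hr).1 (Int.floor_le _)
    simp only [AddSubgroup.vadd_def, AddSubgroup.coe_neg, neg_smul, zsmul_eq_mul, neg_neg,
      vadd_eq_add, mem_Ioc]
    constructor <;> linarith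
  -- Mathlib's fundamental domain for `rℤ` is `Ioc 0 r`, a.e. equal to `Ico 0 r`.
  calc volume ({t : ℝ | ⌊(a - t) / r⌋ ≠ ⌊(b - t) / r⌋} ∩ Ico 0 r)
      = volume ({t : ℝ | ⌊(a - t) / r⌋ ≠ ⌊(b - t) / r⌋} ∩ Ioc 0 r) :=
        measure_congr (ae_eq_refl _ |>.inter Ico_ae_eq_Ioc)
    _ ≤ ∑' g : AddSubgroup.zmultiples r, volume ((g +ᵥ Ioc a b) ∩ Ioc 0 r) :=
        (measure_mono hcover).trans (measure_iUnion_le _)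
    _ = ENNReal.ofReal (b - a) := by rw [← hF.measure_eq_tsum, Real.volume_Ioc]

theorem volume_floor_div_ne_inter_Ico_le {r : ℝ} (hr : 0 < r) (a b : ℝ) :
    volume ({t : ℝ | ⌊(a - t) / r⌋ ≠ ⌊(b - t) / r⌋} ∩ Ico 0 r) ≤ ENNReal.ofReal |a - b| := by
  rcases le_total a b with hab | hba
  · simpa [abs_sub_comm a, abs_of_nonneg (sub_nonneg.2 hab)] using
      volume_floor_div_ne_inter_Ico_le_of_le hr hab
  · simpa [ne_comm, abs_of_nonneg (sub_nonneg.2 hba)] using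
      volume_floor_div_ne_inter_Ico_le_of_le hr hba

theorem EuclideanSpace.volume_coord_mem_inter_box {ι : Type*} [Fintype ι] [DecidableEq ι]
    (i : ι) (S : Set ℝ) (r : ℝ) :
    volume ({t : EuclideanSpace ℝ ι | t i ∈ S} ∩ {t | ∀ k, t k ∈ Ico 0 r}) =
      volume (S ∩ Ico 0 r) * ENNReal.ofReal r ^ (Fintype.card ι - 1) := by
  have hset : {t : EuclideanSpace ℝ ι | t i ∈ S} ∩ {t | ∀ k, t k ∈ Ico 0 r} =
      (MeasurableEquiv.toLp 2 (ι → ℝ)).symm ⁻¹'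
        univ.pi (Function.update (fun _ ↦ Ico 0 r) i (S ∩ Ico 0 r)) := by
    ext t
    simp only [mem_inter_iff, mem_ofPred_eq, mem_preimage, mem_univ_pi]
    rw [Function.forall_update_iff _ (fun k s ↦ (MeasurableEquiv.toLp 2 (ι → ℝ)).symm t k ∈ s)]
    refine ⟨fun ⟨hS, hbox⟩ ↦ ⟨⟨hS, hbox i⟩, fun k _ ↦ hbox k⟩,
      fun ⟨⟨hS, hi⟩, hbox⟩ ↦ ⟨hS, fun k ↦ ?_⟩⟩
    rcases eq_or_ne k i with rfl | hk
    exacts [hi, hbox k hk]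
  rw [hset, (EuclideanSpace.volume_preserving_symm_measurableEquiv_toLp ι).measure_preimage_equiv,
    volume_pi_pi, Fintype.prod_eq_mul_prod_compl i]
  have : ∀ j ∈ ({i}ᶜ : Finset ι),
      volume (Function.update (fun _ ↦ Ico 0 r) i (S ∩ Ico 0 r) j) = ENNReal.ofReal r := by
    intro j hj
    rw [Function.update_of_ne (by simpa using hj), Real.volume_Ico, sub_zero]
  rw [Finset.prod_congr rfl this]
  simp [Finset.card_compl]

theorem volume_exists_floor_div_ne_inter_box_le {ι : Type*} [Fintype ι] {d : ℕ} {r : ℝ}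
    (hr : 0 < r) (p σ : ι → EuclideanSpace ℝ (Fin d)) :
    volume ({t : EuclideanSpace ℝ (Fin d) | ∃ j, ∃ i, ⌊(p j i - t i) / r⌋ ≠ ⌊(σ j i - t i) / r⌋} ∩
        {t | ∀ i, t i ∈ Ico 0 r}) ≤
      ENNReal.ofReal ((√d * ∑ j, ‖p j - σ j‖) * r ^ (d - 1)) := by
  set box := {t : EuclideanSpace ℝ (Fin d) | ∀ i, t i ∈ Ico 0 r}
  have hcell : ∀ j i, volume ({t : EuclideanSpace ℝ (Fin d) |
      ⌊(p j i - t i) / r⌋ ≠ ⌊(σ j i - t i) / r⌋} ∩ box) ≤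
        ENNReal.ofReal (|p j i - σ j i| * r ^ (d - 1)) := by
    intro j i
    rw [ENNReal.ofReal_mul (abs_nonneg _), ENNReal.ofReal_pow hr.le]
    have := EuclideanSpace.volume_coord_mem_inter_box i
      {x | ⌊(p j i - x) / r⌋ ≠ ⌊(σ j i - x) / r⌋} r
    rw [Fintype.card_fin] at this
    exact this.trans_le (by gcongr; exact volume_floor_div_ne_inter_Ico_le hr _ _)
  have hsum : ∑ j, ∑ i, |p j i - σ j i| ≤ √d * ∑ j, ‖p j - σ j‖ := by
    rw [Finset.mul_sum]
    gcongr with j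
    simpa using EuclideanSpace.sum_abs_le_sqrt_card_mul_norm (p j - σ j)
  calc _ ≤ volume (⋃ j, ⋃ i, {t : EuclideanSpace ℝ (Fin d) |
          ⌊(p j i - t i) / r⌋ ≠ ⌊(σ j i - t i) / r⌋} ∩ box) := by
        refine measure_mono ?_
        rintro t ⟨⟨j, i, hji⟩, ht⟩
        exact mem_iUnion₂.2 ⟨j, i, hji, ht⟩
    _ ≤ ∑ j, ∑ i, ENNReal.ofReal (|p j i - σ j i| * r ^ (d - 1)) :=
        (measure_iUnion_fintype_le _ _).trans
          (Finset.sum_le_sum fun j _ ↦ (measure_iUnion_fintype_le _ _).trans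
            (Finset.sum_le_sum fun i _ ↦ hcell j i))
    _ = ENNReal.ofReal ((∑ j, ∑ i, |p j i - σ j i|) * r ^ (d - 1)) := by
        simp_rw [Finset.sum_mul]
        rw [ENNReal.ofReal_sum_of_nonneg (fun j _ ↦ by positivity)]
        exact Finset.sum_congr rfl fun j _ ↦
          (ENNReal.ofReal_sum_of_nonneg fun i _ ↦ by positivity).symm
    _ ≤ _ := by gcongr

theorem no_cluster_split_prob_general (d n : ℕ) (U : ℝ)
    (p σ : Fin n → EuclideanSpace ℝ (Fin d))
    (hcost : ∑ j, ‖p j - σ j‖ ≤ U) :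
    ((ENNReal.ofReal ((Real.sqrt d * n ^ 2 * U) ^ d))⁻¹ •
        volume.restrict
          {t : EuclideanSpace ℝ (Fin d) | ∀ i, t i ∈ Set.Ico (0 : ℝ) (Real.sqrt d * n ^ 2 * U)})
      {t : EuclideanSpace ℝ (Fin d) |
        ∃ j : Fin n, ∃ i : Fin d,
          ⌊(p j i - t i) / (Real.sqrt d * n ^ 2 * U)⌋ ≠
            ⌊(σ j i - t i) / (Real.sqrt d * n ^ 2 * U)⌋}
      ≤ ENNReal.ofReal (1 / n ^ 2) := by
  beta_reduce
  set r := √d * n ^ 2 * U with hr_def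
  rcases Set.eq_empty_or_nonempty {t : EuclideanSpace ℝ (Fin d) |
      ∃ j, ∃ i, ⌊(p j i - t i) / r⌋ ≠ ⌊(σ j i - t i) / r⌋} with hempty | ⟨t, j, i, hji⟩
  · simp [hempty]
  -- A split pair has `p j ≠ σ j`, which forces `d`, `n` and `U` to be positive.
  have hpσ : 0 < ‖p j - σ j‖ := norm_pos_iff.2 fun h ↦ hji (by rw [sub_eq_zero.1 h])
  have hd : 0 < d := i.pos
  have hn : (0 : ℝ) < n := by exact_mod_cast j.pos
  have hU : 0 < U := hpσ.trans_le <|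
    (Finset.single_le_sum (fun j _ ↦ norm_nonneg (p j - σ j)) (Finset.mem_univ j)).trans hcost
  have hr : 0 < r := by positivity
  have hbox : MeasurableSet {t : EuclideanSpace ℝ (Fin d) | ∀ i, t i ∈ Ico 0 r} := by
    measurability
  rw [Measure.smul_apply, smul_eq_mul, Measure.restrict_apply' hbox, ← ENNReal.div_eq_inv_mul]
  calc _ ≤ ENNReal.ofReal ((√d * U) * r ^ (d - 1)) / ENNReal.ofReal (r ^ d) := by
        gcongr
        refine (volume_exists_floor_div_ne_inter_box_le hr p σ).trans ?_
        gcongr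
    _ = ENNReal.ofReal (1 / n ^ 2) := by
        rw [← ENNReal.ofReal_div_of_pos (by positivity), ← mul_pow_sub_one hd.ne',
          mul_div_mul_right _ _ (by positivity), hr_def]
        congr 1
        field_simp

/-- Let `P = {p 1, …, p n} ⊂ ℝ^d`, let `σ` assign each point to a center,
let `U > 0` satisfy `Σ_j ‖p j - σ j‖ ≤ U`, and set `r = √d · n² · U`. If the shift `t` is
drawn uniformly at random from `[0, r)^d`, the probability that some point `p j` lies in a
different grid cell than its center `σ j` is at most `1/n²`. -/
theorem no_cluster_split_prob (d n : ℕ) (hn : 1 ≤ n) (U : ℝ) (hU : 0 < U)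
    (p σ : Fin n → EuclideanSpace ℝ (Fin d))
    (hcost : ∑ j, ‖p j - σ j‖ ≤ U) :
    ((ENNReal.ofReal ((Real.sqrt d * n ^ 2 * U) ^ d))⁻¹ •
        volume.restrict
          {t : EuclideanSpace ℝ (Fin d) | ∀ i, t i ∈ Set.Ico (0 : ℝ) (Real.sqrt d * n ^ 2 * U)})
      {t : EuclideanSpace ℝ (Fin d) |
        ∃ j : Fin n, ∃ i : Fin d,
          ⌊(p j i - t i) / (Real.sqrt d * n ^ 2 * U)⌋ ≠
            ⌊(σ j i - t i) / (Real.sqrt d * n ^ 2 * U)⌋}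
      ≤ ENNReal.ofReal (1 / n ^ 2) :=
  no_cluster_split_prob_general d n U p σ hcost
end

section
/- Let (X, d) be a metric space, let P ⊆ X be finite, and suppose P is partitioned into k + 1 nonempty parts A_0, …, A_k such that d(x, y) ≥ D whenever x and y lie in different parts. Then for every set C ⊆ X with |C| ≤ k, there exists a part A_j such that every point of A_j is at distance at least D/2 from every center in C; consequently Σ_{p ∈ P} min_{c ∈ C} d(p, c) ≥ D/2. -/
open Finset

/-- If a finite set `P` in a metric space is partitioned into `k + 1`
nonempty parts `A 0, …, A k` with pairwise distance at least `D` between points of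
different parts, then for every center set `C` with `|C| ≤ k` there is a part all of whose
points are at distance at least `D/2` from every center of `C`; consequently the `k`-median
cost `Σ_{p ∈ P} min_{c ∈ C} d(p, c)` is at least `D/2`. -/
theorem separated_parts_cost_lower_bound {X : Type*} [MetricSpace X]
    (P : Finset X) (k : ℕ) (D : ℝ)
    (A : Fin (k + 1) → Finset X)
    (hne : ∀ j, (A j).Nonempty)
    (hsub : ∀ j, A j ⊆ P)
    (hcover : ∀ p ∈ P, ∃ j, p ∈ A j)
    (hdisj : ∀ i j, i ≠ j → Disjoint (A i) (A j))
    (hsep : ∀ i j, i ≠ j → ∀ x ∈ A i, ∀ y ∈ A j, D ≤ dist x y)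
    (C : Finset X) (hC : C.Nonempty) (hCk : C.card ≤ k) :
    (∃ j, ∀ p ∈ A j, ∀ c ∈ C, D / 2 ≤ dist p c) ∧
      D / 2 ≤ ∑ p ∈ P, C.inf' hC fun c => dist p c := by
  have hpart : ∃ j, ∀ p ∈ A j, ∀ c ∈ C, D / 2 ≤ dist p c := by
    by_contra h
    push_neg at h
    choose p hp c hc hd using h
    have hinj : Function.Injective c := by
      intro i j hij
      by_contra hne'
      have hsep' := hsep i j hne' (p i) (hp i) (p j) (hp j)
      have hlt : dist (p i) (p j) < D := by
        calc dist (p i) (p j) ≤ dist (p i) (c i) + dist (c i) (p j) := dist_triangle _ _ _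
          _ = dist (p i) (c i) + dist (p j) (c j) := by rw [hij, dist_comm (c j) (p j)]
          _ < D/2 + D/2 := add_lt_add (hd i) (hd j)
          _ = D := by ring
      linarith
    have hcard : k + 1 ≤ C.card := by
      have := Finset.card_le_card_of_injOn (s := Finset.univ) c (fun i _ => hc i) hinj.injOn
      simpa using this
    omega
  refine ⟨hpart, ?_⟩
  obtain ⟨j, hj⟩ := hpart
  obtain ⟨p0, hp0⟩ := hne j
  have hp0P : p0 ∈ P := hsub j hp0
  calc D / 2 ≤ C.inf' hC fun c => dist p0 c :=
        Finset.le_inf' _ _ (fun c hcC => hj p0 hp0 c hcC)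
    _ ≤ ∑ p ∈ P, C.inf' hC fun c => dist p c := by
        refine Finset.single_le_sum (f := fun q => C.inf' hC fun c => dist q c) (fun q _ => ?_) hp0P
        obtain ⟨c0, hc0, he⟩ := Finset.exists_mem_eq_inf' hC fun c => dist q c
        rw [he]; exact dist_nonneg
end

section
/- Let r > 0, let x_1 ≤ x_2 ≤ … ≤ x_k be real numbers, and define y_1 := x_1 and y_{j+1} := y_j + min(x_{j+1} - x_j, 2r) for 1 ≤ j < k. Then for all indices i ≤ j: (a) if x_j - x_i ≤ r, then y_j - y_i = x_j - x_i; and (b) if x_j - x_i ≥ 2r, then y_j - y_i ≥ 2r. -/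
lemma min_add_aux (a b c : ℝ) (ha : 0 ≤ a) (hb0 : 0 ≤ b) (hc : 0 ≤ c) :
    min (a + b) c ≤ min a c + min b c := by
  rcases le_total b c with hb | hb
  · rcases le_total a c with h | h
    · calc min (a + b) c ≤ a + b := min_le_left _ _
        _ = min a c + min b c := by rw [min_eq_left h, min_eq_left hb]
    · have : min (a + b) c ≤ c := min_le_right _ _
      have hb0 : 0 ≤ min b c := le_min (by linarith) hc
      rw [min_eq_right h]; linarith
  · have : min (a + b) c ≤ c := min_le_right _ _
    have ha0 : 0 ≤ min a c := le_min ha hc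
    rw [min_eq_right hb]; linarith

/-- Proposition 5.3, part 2 — adjacency preservation. Let `r > 0`, let
`x 1 ≤ x 2 ≤ … ≤ x k` be sorted reals, and let `y` be defined by `y 1 = x 1` and
`y (j+1) = y j + min (x (j+1) - x j) (2r)` for `1 ≤ j < k`. Then for all `1 ≤ i ≤ j ≤ k`:
(a) if `x j - x i ≤ r` then `y j - y i = x j - x i`, and
(b) if `x j - x i ≥ 2r` then `y j - y i ≥ 2r`. -/
theorem gap_compression_preserves_adjacency (k : ℕ) (hk : 1 ≤ k) (r : ℝ) (hr : 0 < r)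
    (x y : ℕ → ℝ)
    (hsort : ∀ j, 1 ≤ j → j < k → x j ≤ x (j + 1))
    (hy1 : y 1 = x 1)
    (hyrec : ∀ j, 1 ≤ j → j < k → y (j + 1) = y j + min (x (j + 1) - x j) (2 * r)) :
    ∀ i j, 1 ≤ i → i ≤ j → j ≤ k →
      ((x j - x i ≤ r → y j - y i = x j - x i) ∧
       (2 * r ≤ x j - x i → 2 * r ≤ y j - y i)) := by
  intro i j hi hij hjk
  have xmono : ∀ m n, i ≤ m → m ≤ n → n ≤ k → x m ≤ x n := by
    intro m n hm hmn
    induction n, hmn using Nat.le_induction with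
    | base => intro _; exact le_rfl
    | succ p hp ih =>
      intro hpk
      exact le_trans (ih (by omega)) (hsort p (by omega) (by omega))
  have key : ∀ j, i ≤ j → j ≤ k →
      y j - y i ≤ x j - x i ∧ min (x j - x i) (2 * r) ≤ y j - y i := by
    intro j hij
    induction j, hij using Nat.le_induction with
    | base =>
      intro _
      constructor
      · simp
      · rw [sub_self, sub_self]; exact min_le_left _ _
    | succ n hn ih =>
      intro hnk
      have h1n : 1 ≤ n := le_trans hi hn
      have hrec := hyrec n h1n (by omega)
      obtain ⟨ih1, ih2⟩ := ih (by omega)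
      have hΔ : 0 ≤ x (n + 1) - x n := by
        have := hsort n h1n (by omega); linarith
      have hA : 0 ≤ x n - x i := by
        have := xmono i n le_rfl hn (by omega); linarith
      have hminle : min (x (n + 1) - x n) (2 * r) ≤ x (n + 1) - x n :=
        min_le_left _ _
      constructor
      · rw [hrec]; linarith
      · have heq : x (n + 1) - x i = (x n - x i) + (x (n + 1) - x n) := by ring
        have := min_add_aux (x n - x i) (x (n + 1) - x n) (2 * r) hA hΔ (by linarith)
        rw [hrec, heq]
        linarith
  obtain ⟨h1, h2⟩ := key j hij hjk
  constructor
  · intro hle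
    have : min (x j - x i) (2 * r) = x j - x i := min_eq_left (by linarith)
    linarith [this ▸ h2]
  · intro hge
    have : min (x j - x i) (2 * r) = 2 * r := min_eq_right (by linarith)
    linarith [this ▸ h2]
end
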